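/- arXiv:1910.07817 — 3 statements merged into one kernel-verified Lean document; each statement's English description precedes it below -/
import Mathlib

section
/- Let $\hat\Sigma \in \mathbb{S}^n_{++}$, $\rho \ge 0$, and let $\Sigma \in \mathbb{S}^n_{++}$ satisfy $\frac{1}{\sqrt 2}\|\log(\hat\Sigma^{-1/2}\Sigma\hat\Sigma^{-1/2})\|_F \le \rho$. Then $\lambda_{\min}(\hat\Sigma)\, e^{-\sqrt 2 \rho}\, I_n \preceq \Sigma \preceq \lambda_{\max}(\hat\Sigma)\, e^{\sqrt 2 \rho}\, I_n$. -/
open Matrix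

variable {n : ℕ}

/-- Apply a real function spectrally to a (hermitian) matrix. -/
noncomputable def matFun (f : ℝ → ℝ) (A : Matrix (Fin n) (Fin n) ℝ) :
    Matrix (Fin n) (Fin n) ℝ :=
  if h : A.IsHermitian then
    (h.eigenvectorUnitary : Matrix (Fin n) (Fin n) ℝ) *
      Matrix.diagonal (fun i => f (h.eigenvalues i)) *
      star (h.eigenvectorUnitary : Matrix (Fin n) (Fin n) ℝ)
  else 0

/-- Matrix logarithm (spectral). -/
noncomputable def matLog (A : Matrix (Fin n) (Fin n) ℝ) : Matrix (Fin n) (Fin n) ℝ :=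
  matFun Real.log A

/-- Matrix real power (spectral). -/
noncomputable def matPow (A : Matrix (Fin n) (Fin n) ℝ) (t : ℝ) : Matrix (Fin n) (Fin n) ℝ :=
  matFun (fun x => x ^ t) A

/-- The unique positive semidefinite square root (spectral). -/
noncomputable def matSqrt (A : Matrix (Fin n) (Fin n) ℝ) : Matrix (Fin n) (Fin n) ℝ :=
  matFun Real.sqrt A

/-- Frobenius norm. -/
noncomputable def frob (A : Matrix (Fin n) (Fin n) ℝ) : ℝ :=
  Real.sqrt (∑ i, ∑ j, (A i j) ^ 2)

/-- Fisher-Rao distance between positive definite matrices. -/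
noncomputable def FRdist (A B : Matrix (Fin n) (Fin n) ℝ) : ℝ :=
  (1 / Real.sqrt 2) * frob (matLog ((matSqrt B)⁻¹ * A * (matSqrt B)⁻¹))

/-!
Put `B = Σ̂^{1/2}` and `M = B⁻¹ Σ B⁻¹`, so that `Σ = B M B`. Every eigenvalue `μ` of `M` satisfies
`|log μ| ≤ ‖log M‖_F ≤ √2 ρ`, hence `e^{-√2ρ} ≤ M ≤ e^{√2ρ}` in the Loewner order. Conjugation by
the self-adjoint `B` is monotone and turns these into `e^{-√2ρ} Σ̂ ≤ Σ ≤ e^{√2ρ} Σ̂`; finally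
`λ_min(Σ̂) ≤ Σ̂ ≤ λ_max(Σ̂)`.
-/

open scoped MatrixOrder ComplexOrder

lemma matFun_eq_cfc (f : ℝ → ℝ) (A : Matrix (Fin n) (Fin n) ℝ) : matFun f A = cfc f A := by
  by_cases hA : A.IsHermitian
  · rw [matFun, dif_pos hA, hA.cfc_eq, IsHermitian.cfc, Unitary.conjStarAlgAut_apply]
    rfl
  · exact (dif_neg hA).trans (cfc_apply_of_not_predicate A hA).symm

lemma matSqrt_eq_sqrt {A : Matrix (Fin n) (Fin n) ℝ} (hA : A.PosSemidef) :
    matSqrt A = CFC.sqrt A := by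
  rw [matSqrt, matFun_eq_cfc, CFC.sqrt_eq_real_sqrt A hA.nonneg, cfcₙ_eq_cfc]

section InvSqrtConj

variable {ι 𝕜 : Type*} [Fintype ι] [DecidableEq ι] [RCLike 𝕜] {A B : Matrix ι ι 𝕜}

lemma Matrix.PosDef.isUnit_sqrt (hB : B.PosDef) : IsUnit (CFC.sqrt B) :=
  isUnit_of_mul_isUnit_left ((CFC.sqrt_mul_sqrt_self B hB.posSemidef.nonneg).symm ▸ hB.isUnit)

lemma Matrix.PosDef.sqrt_mul_inv_sqrt_conj_mul_sqrt (hB : B.PosDef) (A : Matrix ι ι 𝕜) :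
    CFC.sqrt B * ((CFC.sqrt B)⁻¹ * A * (CFC.sqrt B)⁻¹) * CFC.sqrt B = A := by
  have hdet := (isUnit_iff_isUnit_det _).mp hB.isUnit_sqrt
  rw [← Matrix.mul_assoc, ← Matrix.mul_assoc, mul_nonsing_inv _ hdet, Matrix.one_mul,
    Matrix.mul_assoc, nonsing_inv_mul _ hdet, Matrix.mul_one]

lemma Matrix.PosDef.inv_sqrt_conj (hA : A.PosDef) (hB : B.PosDef) :
    ((CFC.sqrt B)⁻¹ * A * (CFC.sqrt B)⁻¹).PosDef := by
  have hself : ((CFC.sqrt B)⁻¹)ᴴ = (CFC.sqrt B)⁻¹ := by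
    rw [conjTranspose_nonsing_inv, (CFC.sqrt_nonneg B).isSelfAdjoint.isHermitian.eq]
  have hinj : Function.Injective ((CFC.sqrt B)⁻¹).mulVec := by
    rw [mulVec_injective_iff_isUnit]
    exact isUnit_nonsing_inv_iff.mpr hB.isUnit_sqrt
  simpa only [hself] using hA.conjTranspose_mul_mul_same hinj

end InvSqrtConj

section Frobenius

attribute [local instance] Matrix.frobeniusNormedAddCommGroup Matrix.frobeniusNormSMulClass

lemma frob_eq_norm (A : Matrix (Fin n) (Fin n) ℝ) : frob A = ‖A‖ := by
  simp [frob, Matrix.frobenius_norm_def, Real.sqrt_eq_rpow]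

lemma Matrix.norm_le_frobenius_norm_of_mem_spectrum {ι 𝕜 : Type*} [Fintype ι] [DecidableEq ι]
    [RCLike 𝕜] {X : Matrix ι ι 𝕜} {μ : 𝕜} (hμ : μ ∈ spectrum 𝕜 X) : ‖μ‖ ≤ ‖X‖ := by
  rw [← spectrum_toLin', ← Module.End.hasEigenvalue_iff_mem_spectrum] at hμ
  obtain ⟨v, hv⟩ := hμ.exists_hasEigenvector
  have hXv : X * replicateCol Unit v = μ • replicateCol Unit v := by
    rw [← replicateCol_mulVec, ← toLin'_apply, hv.apply_eq_smul, replicateCol_smul]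
  have hv0 : 0 < ‖replicateCol Unit v‖ := by
    simpa [frobenius_norm_replicateCol] using hv.2
  have := frobenius_norm_mul X (replicateCol Unit v)
  rw [hXv, norm_smul] at this
  exact le_of_mul_le_mul_right this hv0

open Real in
lemma Matrix.PosDef.mem_Icc_exp_of_norm_cfc_log_le {ι : Type*} [Fintype ι] [DecidableEq ι]
    {A : Matrix ι ι ℝ} (hA : A.PosDef) {r : ℝ} (h : ‖cfc log A‖ ≤ r) {x : ℝ}
    (hx : x ∈ spectrum ℝ A) : x ∈ Set.Icc (exp (-r)) (exp r) := by
  have hx_pos : 0 < x := by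
    obtain ⟨i, rfl⟩ := hA.isHermitian.spectrum_real_eq_range_eigenvalues ▸ hx
    exact hA.eigenvalues_pos i
  have hlog : |log x| ≤ r := by
    have hmem : log x ∈ spectrum ℝ (cfc log A) := by
      have hmap := cfc_map_spectrum log A hA.isHermitian (A.finite_real_spectrum.continuousOn log)
      exact hmap ▸ Set.mem_image_of_mem log hx
    exact (norm_le_frobenius_norm_of_mem_spectrum hmem).trans h
  rw [← exp_log hx_pos]
  exact ⟨exp_le_exp.2 (neg_le_of_abs_le hlog), exp_le_exp.2 (le_of_abs_le hlog)⟩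

lemma FRdist_eq_norm_cfc_log {A B : Matrix (Fin n) (Fin n) ℝ} (hB : B.PosSemidef) :
    FRdist A B = ‖cfc Real.log ((CFC.sqrt B)⁻¹ * A * (CFC.sqrt B)⁻¹)‖ / Real.sqrt 2 := by
  rw [FRdist, matLog, matFun_eq_cfc, frob_eq_norm, matSqrt_eq_sqrt hB, one_div_mul_eq_div]

open Real in
lemma Matrix.PosDef.mem_Icc_exp_of_FRdist_le {A B : Matrix (Fin n) (Fin n) ℝ} (hA : A.PosDef)
    (hB : B.PosDef) {ρ : ℝ} (h : FRdist A B ≤ ρ) {x : ℝ}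
    (hx : x ∈ spectrum ℝ ((CFC.sqrt B)⁻¹ * A * (CFC.sqrt B)⁻¹)) :
    x ∈ Set.Icc (exp (-(√2 * ρ))) (exp (√2 * ρ)) := by
  rw [FRdist_eq_norm_cfc_log hB.posSemidef, div_le_iff₀ (by positivity), mul_comm] at h
  exact (hA.inv_sqrt_conj hB).mem_Icc_exp_of_norm_cfc_log_le h hx

end Frobenius

lemma Matrix.IsHermitian.algebraMap_iInf_eigenvalues_le {ι 𝕜 : Type*} [Fintype ι] [DecidableEq ι]
    [RCLike 𝕜] {A : Matrix ι ι 𝕜} (hA : A.IsHermitian) :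
    algebraMap ℝ _ (⨅ i, hA.eigenvalues i) ≤ A :=
  algebraMap_le_of_le_spectrum fun x hx => by
    obtain ⟨i, rfl⟩ := hA.spectrum_real_eq_range_eigenvalues ▸ hx
    exact ciInf_le (Finite.bddBelow_range _) i

lemma Matrix.IsHermitian.le_algebraMap_iSup_eigenvalues {ι 𝕜 : Type*} [Fintype ι] [DecidableEq ι]
    [RCLike 𝕜] {A : Matrix ι ι 𝕜} (hA : A.IsHermitian) :
    A ≤ algebraMap ℝ _ (⨆ i, hA.eigenvalues i) :=
  le_algebraMap_of_spectrum_le fun x hx => by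
    obtain ⟨i, rfl⟩ := hA.spectrum_real_eq_range_eigenvalues ▸ hx
    exact le_ciSup (Finite.bddAbove_range _) i

lemma mul_algebraMap_mul {R A : Type*} [CommSemiring R] [Semiring A] [Algebra R A] (a b : A)
    (r : R) : a * algebraMap R A r * b = r • (a * b) := by
  rw [Algebra.algebraMap_eq_smul_one, mul_smul_comm, mul_one, smul_mul_assoc]

section ConjugateBounds

variable {A : Type*} [Ring A] [PartialOrder A] [StarRing A] [StarOrderedRing A] [Algebra ℝ A]
  [PosSMulMono ℝ A] {b m : A} {r s : ℝ}

lemma IsSelfAdjoint.algebraMap_mul_le_conjugate (hb : IsSelfAdjoint b) (hr : 0 ≤ r)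
    (hm : algebraMap ℝ A r ≤ m) (hs : algebraMap ℝ A s ≤ b * b) :
    algebraMap ℝ A (s * r) ≤ b * m * b :=
  calc algebraMap ℝ A (s * r) = r • algebraMap ℝ A s := by
        rw [mul_comm, map_mul, Algebra.smul_def]
    _ ≤ r • (b * b) := smul_le_smul_of_nonneg_left hs hr
    _ = b * algebraMap ℝ A r * b := (mul_algebraMap_mul b b r).symm
    _ ≤ b * m * b := hb.conjugate_le_conjugate hm

lemma IsSelfAdjoint.conjugate_le_algebraMap_mul (hb : IsSelfAdjoint b) (hr : 0 ≤ r)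
    (hm : m ≤ algebraMap ℝ A r) (hs : b * b ≤ algebraMap ℝ A s) :
    b * m * b ≤ algebraMap ℝ A (s * r) :=
  calc b * m * b ≤ b * algebraMap ℝ A r * b := hb.conjugate_le_conjugate hm
    _ = r • (b * b) := mul_algebraMap_mul b b r
    _ ≤ r • algebraMap ℝ A s := smul_le_smul_of_nonneg_left hs hr
    _ = algebraMap ℝ A (s * r) := by rw [mul_comm, map_mul, Algebra.smul_def]

end ConjugateBounds

theorem fr_ball_loewner_bounds_general (Sh Sig : Matrix (Fin n) (Fin n) ℝ) (ρ : ℝ)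
    (hSh : Sh.PosDef) (hSig : Sig.PosDef)
    (hd : FRdist Sig Sh ≤ ρ) :
    (Sig - ((⨅ i, hSh.1.eigenvalues i) * Real.exp (-(Real.sqrt 2 * ρ))) •
        (1 : Matrix (Fin n) (Fin n) ℝ)).PosSemidef ∧
    (((⨆ i, hSh.1.eigenvalues i) * Real.exp (Real.sqrt 2 * ρ)) •
        (1 : Matrix (Fin n) (Fin n) ℝ) - Sig).PosSemidef := by
  set B := CFC.sqrt Sh
  set M := B⁻¹ * Sig * B⁻¹
  have hB : IsSelfAdjoint B := (CFC.sqrt_nonneg Sh).isSelfAdjoint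
  have hBB : B * B = Sh := CFC.sqrt_mul_sqrt_self Sh hSh.posSemidef.nonneg
  have hM : IsSelfAdjoint M := (hSig.inv_sqrt_conj hSh).isHermitian
  have hspec : ∀ x ∈ spectrum ℝ M, _ := fun _ => hSig.mem_Icc_exp_of_FRdist_le hSh hd
  rw [← le_iff, ← le_iff, ← Algebra.algebraMap_eq_smul_one, ← Algebra.algebraMap_eq_smul_one,
    ← hSh.sqrt_mul_inv_sqrt_conj_mul_sqrt Sig]
  exact ⟨hB.algebraMap_mul_le_conjugate (Real.exp_pos _).le
      (algebraMap_le_of_le_spectrum (fun x hx => (hspec x hx).1) hM)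
      (hSh.1.algebraMap_iInf_eigenvalues_le.trans hBB.ge),
    hB.conjugate_le_algebraMap_mul (Real.exp_pos _).le
      (le_algebraMap_of_spectrum_le (fun x hx => (hspec x hx).2) hM)
      (hBB.le.trans hSh.1.le_algebraMap_iSup_eigenvalues)⟩

theorem fr_ball_loewner_bounds (Sh Sig : Matrix (Fin n) (Fin n) ℝ) (ρ : ℝ)
    (hρ : 0 ≤ ρ) (hSh : Sh.PosDef) (hSig : Sig.PosDef)
    (hd : FRdist Sig Sh ≤ ρ) :
    (Sig - ((⨅ i, hSh.1.eigenvalues i) * Real.exp (-(Real.sqrt 2 * ρ))) •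
        (1 : Matrix (Fin n) (Fin n) ℝ)).PosSemidef ∧
    (((⨆ i, hSh.1.eigenvalues i) * Real.exp (Real.sqrt 2 * ρ)) •
        (1 : Matrix (Fin n) (Fin n) ℝ) - Sig).PosSemidef :=
  fr_ball_loewner_bounds_general Sh Sig ρ hSh hSig hd
end

section
/- For any positive semidefinite matrix $S \in \mathbb{S}^n_+$, the function $\Sigma \mapsto \mathrm{Tr}(S\Sigma^{-1}) + \log\det\Sigma$ is geodesically convex on $\mathbb{S}^n_{++}$: for all $\Sigma_0,\Sigma_1 \in \mathbb{S}^n_{++}$ and $t \in [0,1]$, with $\gamma(t) = \Sigma_0^{1/2}(\Sigma_0^{-1/2}\Sigma_1\Sigma_0^{-1/2})^t\Sigma_0^{1/2}$, one has $\mathrm{Tr}(S\gamma(t)^{-1}) + \log\det\gamma(t) \le (1-t)\big(\mathrm{Tr}(S\Sigma_0^{-1}) + \log\det\Sigma_0\big) + t\big(\mathrm{Tr}(S\Sigma_1^{-1}) + \log\det\Sigma_1\big)$. -/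
open Matrix

variable {n : ℕ}

/-!
Put `S0 = W Wᴴ` and `S1 = W D Wᴴ` with `W = S0^{1/2} V` and `D` diagonal, where
`V D Vᴴ` is the spectral decomposition of `S0^{-1/2} S1 S0^{-1/2}`; then the geodesic is
`γ(t) = W D^t Wᴴ`. Along any such path the objective equals
`log det(W)² + ∑ᵢ (qᵢ dᵢ^{-t} + t log dᵢ)`, where `qᵢ ≥ 0` are the diagonal entries of the
positive semidefinite matrix `W⁻¹ S W⁻ᴴ`, and each summand is convex in `t` by Bernoulli's
inequality `dᵢ^{-t} ≤ (1 - t) + t dᵢ⁻¹`.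
-/

section MatFun

variable {A : Matrix (Fin n) (Fin n) ℝ}

lemma matFun_of_isHermitian (f : ℝ → ℝ) (hA : A.IsHermitian) :
    matFun f A = (hA.eigenvectorUnitary : Matrix (Fin n) (Fin n) ℝ) *
      diagonal (fun i => f (hA.eigenvalues i)) *
      star (hA.eigenvectorUnitary : Matrix (Fin n) (Fin n) ℝ) :=
  dif_pos hA

lemma isHermitian_matFun (f : ℝ → ℝ) : (matFun f A).IsHermitian := by
  by_cases hA : A.IsHermitian
  · rw [matFun_of_isHermitian f hA, star_eq_conjTranspose]
    exact isHermitian_mul_mul_conjTranspose _ (isHermitian_diagonal _)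
  · rw [matFun, dif_neg hA]
    exact isHermitian_zero

lemma matFun_mul_matFun (f g : ℝ → ℝ) (hA : A.IsHermitian) :
    matFun f A * matFun g A = matFun (fun x => f x * g x) A := by
  have hU : star (hA.eigenvectorUnitary : Matrix (Fin n) (Fin n) ℝ) *
      (hA.eigenvectorUnitary : Matrix (Fin n) (Fin n) ℝ) = 1 :=
    mem_unitaryGroup_iff'.mp hA.eigenvectorUnitary.2
  simp only [matFun_of_isHermitian _ hA, Matrix.mul_assoc]
  rw [← Matrix.mul_assoc (star _) _ (_ * star _), hU, Matrix.one_mul,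
    ← Matrix.mul_assoc (diagonal _), diagonal_mul_diagonal]

lemma matFun_eq_self {f : ℝ → ℝ} (hA : A.IsHermitian)
    (hf : ∀ i, f (hA.eigenvalues i) = hA.eigenvalues i) : matFun f A = A := by
  have hspec := hA.spectral_theorem
  rw [RCLike.ofReal_real_eq_id, Function.id_comp] at hspec
  rw [matFun_of_isHermitian f hA]
  simp only [hf]
  exact hspec.symm

lemma matSqrt_mul_self (hA : A.PosSemidef) : matSqrt A * matSqrt A = A := by
  rw [matSqrt, matFun_mul_matFun _ _ hA.1]
  exact matFun_eq_self hA.1 fun i => Real.mul_self_sqrt (hA.eigenvalues_nonneg i)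

end MatFun

section Congruence

variable {ι K : Type*} [Fintype ι] [DecidableEq ι]

theorem Matrix.det_mul_diagonal_mul_conjTranspose [CommRing K] [StarRing K]
    (W : Matrix ι ι K) (u : ι → K) :
    (W * diagonal u * Wᴴ).det = W.det * star W.det * ∏ i, u i := by
  rw [det_mul, det_mul, det_diagonal, det_conjTranspose]
  ring

theorem Matrix.trace_mul_inv_mul_diagonal_mul_conjTranspose [Field K] [StarRing K]
    (S W : Matrix ι ι K) {u : ι → K} (hu : ∀ i, u i ≠ 0) :
    (S * (W * diagonal u * Wᴴ)⁻¹).trace = ∑ i, (W⁻¹ * S * W⁻¹ᴴ) i i * (u i)⁻¹ := by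
  have hinv : (diagonal u)⁻¹ = diagonal fun i => (u i)⁻¹ :=
    inv_eq_left_inv (by rw [diagonal_mul_diagonal]; simp [hu])
  rw [mul_inv_rev, mul_inv_rev, hinv, ← conjTranspose_nonsing_inv, ← Matrix.mul_assoc,
    ← Matrix.mul_assoc, trace_mul_comm]
  simp only [trace, diag_apply, ← Matrix.mul_assoc, mul_diagonal]

end Congruence

theorem Real.mul_inv_rpow_add_mul_log_le {q d t : ℝ} (hq : 0 ≤ q) (hd : 0 < d) (ht0 : 0 ≤ t)
    (ht1 : t ≤ 1) : q * (d ^ t)⁻¹ + t * log d ≤ (1 - t) * q + t * (q * d⁻¹ + log d) := by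
  have bernoulli : d⁻¹ ^ t ≤ 1 + t * (d⁻¹ - 1) := by
    simpa using rpow_one_add_le_one_add_mul_self (s := d⁻¹ - 1) (by linarith [inv_pos.2 hd])
      ht0 ht1
  rw [← inv_rpow hd.le]
  nlinarith [mul_le_mul_of_nonneg_left bernoulli hq]

noncomputable def gaussianNLL {ι : Type*} [Fintype ι] [DecidableEq ι] (S C : Matrix ι ι ℝ) : ℝ :=
  (S * C⁻¹).trace + Real.log C.det

section GaussianNLL

variable {ι : Type*} [Fintype ι] [DecidableEq ι] {S W : Matrix ι ι ℝ}

theorem gaussianNLL_mul_diagonal_mul_conjTranspose (hW : W.det ≠ 0) {u : ι → ℝ}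
    (hu : ∀ i, 0 < u i) :
    gaussianNLL S (W * diagonal u * Wᴴ) =
      Real.log (W.det * W.det) + ∑ i, ((W⁻¹ * S * W⁻¹ᴴ) i i * (u i)⁻¹ + Real.log (u i)) := by
  have hprod : ∏ i, u i ≠ 0 := Finset.prod_ne_zero_iff.2 fun i _ => (hu i).ne'
  rw [gaussianNLL, trace_mul_inv_mul_diagonal_mul_conjTranspose S W fun i => (hu i).ne',
    det_mul_diagonal_mul_conjTranspose, star_trivial, Real.log_mul (mul_ne_zero hW hW) hprod,
    Real.log_prod fun i _ => (hu i).ne', Finset.sum_add_distrib]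
  ring

theorem gaussianNLL_mul_diagonal_rpow_mul_conjTranspose_le (hS : S.PosSemidef) (hW : W.det ≠ 0)
    {d : ι → ℝ} (hd : ∀ i, 0 < d i) {t : ℝ} (ht0 : 0 ≤ t) (ht1 : t ≤ 1) :
    gaussianNLL S (W * diagonal (fun i => d i ^ t) * Wᴴ) ≤
      (1 - t) * gaussianNLL S (W * Wᴴ) + t * gaussianNLL S (W * diagonal d * Wᴴ) := by
  have hq : ∀ i, 0 ≤ (W⁻¹ * S * W⁻¹ᴴ) i i := fun _ =>
    (hS.mul_mul_conjTranspose_same _).diag_nonneg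
  have hWW : W * Wᴴ = W * diagonal 1 * Wᴴ := by simp
  rw [hWW, gaussianNLL_mul_diagonal_mul_conjTranspose hW fun i => Real.rpow_pos_of_pos (hd i) t,
    gaussianNLL_mul_diagonal_mul_conjTranspose (u := 1) hW fun _ => one_pos,
    gaussianNLL_mul_diagonal_mul_conjTranspose hW hd]
  simp only [Pi.one_apply, inv_one, mul_one, Real.log_one, add_zero, Real.log_rpow (hd _)]
  set q := fun i => (W⁻¹ * S * W⁻¹ᴴ) i i
  have hsum : ∑ i, (q i * (d i ^ t)⁻¹ + t * Real.log (d i)) ≤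
      (1 - t) * ∑ i, q i + t * ∑ i, (q i * (d i)⁻¹ + Real.log (d i)) := by
    rw [Finset.mul_sum, Finset.mul_sum, ← Finset.sum_add_distrib]
    exact Finset.sum_le_sum fun i _ => Real.mul_inv_rpow_add_mul_log_le (hq i) (hd i) ht0 ht1
  linarith

end GaussianNLL

theorem Matrix.PosDef.exists_matPow_eq_unitary_conj_diagonal {M : Matrix (Fin n) (Fin n) ℝ}
    (hM : M.PosDef) :
    ∃ (V : Matrix (Fin n) (Fin n) ℝ) (d : Fin n → ℝ), V * star V = 1 ∧ (∀ i, 0 < d i) ∧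
      M = V * diagonal d * star V ∧
      ∀ t, matPow M t = V * diagonal (fun i => d i ^ t) * star V :=
  ⟨_, _, mem_unitaryGroup_iff.mp hM.1.eigenvectorUnitary.2, hM.eigenvalues_pos,
    (matFun_eq_self (f := id) hM.1 fun _ => rfl).symm.trans (matFun_of_isHermitian id hM.1),
    fun _ => matFun_of_isHermitian _ hM.1⟩

theorem exists_simultaneous_congr_diagonal {S0 S1 : Matrix (Fin n) (Fin n) ℝ} (h0 : S0.PosDef)
    (h1 : S1.PosDef) :
    ∃ (W : Matrix (Fin n) (Fin n) ℝ) (d : Fin n → ℝ), W.det ≠ 0 ∧ (∀ i, 0 < d i) ∧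
      S0 = W * Wᴴ ∧ S1 = W * diagonal d * Wᴴ ∧
      ∀ t, matSqrt S0 * matPow ((matSqrt S0)⁻¹ * S1 * (matSqrt S0)⁻¹) t * matSqrt S0 =
        W * diagonal (fun i => d i ^ t) * Wᴴ := by
  set R := matSqrt S0
  have hR : Rᴴ = R := isHermitian_matFun _
  have hRR : R * R = S0 := matSqrt_mul_self h0.posSemidef
  have hRdet : IsUnit R.det := by
    refine isUnit_iff_ne_zero.2 fun h => h0.det_pos.ne' ?_
    rw [← hRR, det_mul, h, zero_mul]
  have hM : (R⁻¹ * S1 * R⁻¹).PosDef := by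
    have := h1.conjTranspose_mul_mul_same
      (mulVec_injective_of_isUnit ((isUnit_iff_isUnit_det _).2 (isUnit_nonsing_inv_det R hRdet)))
    rwa [conjTranspose_nonsing_inv, hR] at this
  obtain ⟨V, d, hVV, hd, hMV, hpow⟩ := hM.exists_matPow_eq_unitary_conj_diagonal
  have hS1 : S1 = R * (R⁻¹ * S1 * R⁻¹) * R := by
    rw [show R * (R⁻¹ * S1 * R⁻¹) * R = R * R⁻¹ * S1 * (R⁻¹ * R) by simp only [Matrix.mul_assoc],
      mul_nonsing_inv R hRdet, nonsing_inv_mul R hRdet, Matrix.one_mul, Matrix.mul_one]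
  have hWH : (R * V)ᴴ = star V * R := by rw [conjTranspose_mul, hR, star_eq_conjTranspose]
  refine ⟨R * V, d, ?_, hd, ?_, ?_, fun t => ?_⟩
  · rw [det_mul]
    exact mul_ne_zero hRdet.ne_zero
      (left_ne_zero_of_mul_eq_one (by rw [← det_mul, hVV, det_one] : V.det * (star V).det = 1))
  · rw [hWH, Matrix.mul_assoc, ← Matrix.mul_assoc V, hVV, Matrix.one_mul, hRR]
  · rw [hWH, hS1, hMV]; simp only [Matrix.mul_assoc]
  · rw [hWH, hpow]; simp only [Matrix.mul_assoc]

theorem geodesic_convexity_L (S S0 S1 : Matrix (Fin n) (Fin n) ℝ)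
    (hS : S.PosSemidef) (h0 : S0.PosDef) (h1 : S1.PosDef) (t : ℝ)
    (ht0 : 0 ≤ t) (ht1 : t ≤ 1) :
    (S * (matSqrt S0 * matPow ((matSqrt S0)⁻¹ * S1 * (matSqrt S0)⁻¹) t * matSqrt S0)⁻¹).trace
      + Real.log (matSqrt S0 * matPow ((matSqrt S0)⁻¹ * S1 * (matSqrt S0)⁻¹) t * matSqrt S0).det
    ≤ (1 - t) * ((S * S0⁻¹).trace + Real.log S0.det)
      + t * ((S * S1⁻¹).trace + Real.log S1.det) := by
  obtain ⟨W, d, hW, hd, hS0, hS1, hγ⟩ := exists_simultaneous_congr_diagonal h0 h1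
  change gaussianNLL S _ ≤ (1 - t) * gaussianNLL S S0 + t * gaussianNLL S S1
  rw [hγ, hS0, hS1]
  exact gaussianNLL_mul_diagonal_rpow_mul_conjTranspose_le hS hW hd ht0 ht1
end

section
/- Let $\Sigma \in \mathbb{S}^n_{++}$, $S \in \mathbb{S}^n_+$, and let $V \in \mathbb{S}^n$ satisfy $\frac{1}{2}\mathrm{Tr}(\Sigma^{-1}V\Sigma^{-1}V) = 1$. Then $0 \le \mathrm{Tr}(\Sigma^{-1}S\Sigma^{-1}V\Sigma^{-1}V) \le 2\lambda_{\max}(S)/\lambda_{\min}(\Sigma)$, and if moreover $S \succ 0$ then $\mathrm{Tr}(\Sigma^{-1}S\Sigma^{-1}V\Sigma^{-1}V) \ge 2\lambda_{\min}(S)/\lambda_{\max}(\Sigma)$. -/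
open Matrix

variable {n : ℕ}

/-! With `P = Σ⁻¹ V Σ⁻¹ V Σ⁻¹`, which is positive semidefinite as `(Σ⁻¹ V) Σ⁻¹ (Σ⁻¹ V)ᴴ`, cyclicity
of the trace turns the quantity into `tr (S P)` and the normalisation into `tr (Σ P) = 2`.
For `P ⪰ 0` the map `X ↦ tr (X P)` is monotone for the Loewner order, and
`λ_min(X) • 1 ≤ X ≤ λ_max(X) • 1`; hence `λ_min(S) tr P ≤ tr (S P) ≤ λ_max(S) tr P` and
`λ_min(Σ) tr P ≤ 2 ≤ λ_max(Σ) tr P`, and eliminating `tr P` gives both bounds. -/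

open scoped MatrixOrder

namespace Matrix
variable {ι : Type*} [Fintype ι]

theorem PosSemidef.mul_mul_mul_mul_of_isHermitian {M V : Matrix ι ι ℝ} (hM : M.PosSemidef)
    (hV : V.IsHermitian) : (M * V * M * V * M).PosSemidef := by
  have h := hM.mul_mul_conjTranspose_same (M * V)
  rwa [conjTranspose_mul, hV.eq, hM.1.eq, ← Matrix.mul_assoc] at h

variable [DecidableEq ι] {A B P : Matrix ι ι ℝ}

theorem PosSemidef.trace_mul_nonneg (hA : A.PosSemidef) (hB : B.PosSemidef) :
    0 ≤ (A * B).trace := by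
  obtain ⟨C, rfl⟩ := CStarAlgebra.nonneg_iff_eq_star_mul_self.mp hB.nonneg
  rw [← Matrix.mul_assoc, Matrix.trace_mul_cycle]
  exact (hA.mul_mul_conjTranspose_same C).trace_nonneg

theorem IsHermitian.le_smul_one_of_eigenvalues_le (hA : A.IsHermitian) {c : ℝ}
    (h : ∀ i, hA.eigenvalues i ≤ c) : A ≤ c • 1 := by
  rw [← Algebra.algebraMap_eq_smul_one, le_algebraMap_iff_spectrum_le hA.isSelfAdjoint,
    hA.spectrum_real_eq_range_eigenvalues]
  rintro _ ⟨i, rfl⟩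
  exact h i

theorem IsHermitian.smul_one_le_of_le_eigenvalues (hA : A.IsHermitian) {c : ℝ}
    (h : ∀ i, c ≤ hA.eigenvalues i) : c • 1 ≤ A := by
  rw [← Algebra.algebraMap_eq_smul_one, algebraMap_le_iff_le_spectrum hA.isSelfAdjoint,
    hA.spectrum_real_eq_range_eigenvalues]
  rintro _ ⟨i, rfl⟩
  exact h i

theorem trace_mul_le_trace_mul_of_le (hAB : A ≤ B) (hP : P.PosSemidef) :
    (A * P).trace ≤ (B * P).trace := by
  have := PosSemidef.trace_mul_nonneg (le_iff.mp hAB) hP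
  rwa [Matrix.sub_mul, trace_sub, sub_nonneg] at this

theorem IsHermitian.trace_mul_le_of_eigenvalues_le (hA : A.IsHermitian)
    (hP : P.PosSemidef) {c : ℝ} (h : ∀ i, hA.eigenvalues i ≤ c) : (A * P).trace ≤ c * P.trace := by
  simpa using trace_mul_le_trace_mul_of_le (hA.le_smul_one_of_eigenvalues_le h) hP

theorem IsHermitian.le_trace_mul_of_le_eigenvalues (hA : A.IsHermitian)
    (hP : P.PosSemidef) {c : ℝ} (h : ∀ i, c ≤ hA.eigenvalues i) : c * P.trace ≤ (A * P).trace := by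
  simpa using trace_mul_le_trace_mul_of_le (hA.smul_one_le_of_le_eigenvalues h) hP

theorem IsHermitian.eigenvalues_le_iSup (hA : A.IsHermitian) (i : ι) :
    hA.eigenvalues i ≤ ⨆ j, hA.eigenvalues j :=
  le_ciSup (Set.finite_range _).bddAbove i

theorem IsHermitian.iInf_le_eigenvalues (hA : A.IsHermitian) (i : ι) :
    ⨅ j, hA.eigenvalues j ≤ hA.eigenvalues i :=
  ciInf_le (Set.finite_range _).bddBelow i

theorem PosDef.iInf_eigenvalues_pos [Nonempty ι] (hA : A.PosDef) : 0 < ⨅ i, hA.1.eigenvalues i := by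
  obtain ⟨i, hi⟩ := exists_eq_ciInf_of_finite (f := hA.1.eigenvalues)
  exact hi ▸ hA.eigenvalues_pos i

theorem PosDef.iSup_eigenvalues_pos [Nonempty ι] (hA : A.PosDef) : 0 < ⨆ i, hA.1.eigenvalues i :=
  (hA.eigenvalues_pos (Classical.arbitrary ι)).trans_le (hA.1.eigenvalues_le_iSup _)

theorem PosSemidef.iSup_eigenvalues_nonneg [Nonempty ι] (hA : A.PosSemidef) :
    0 ≤ ⨆ i, hA.1.eigenvalues i :=
  (hA.eigenvalues_nonneg (Classical.arbitrary ι)).trans (hA.1.eigenvalues_le_iSup _)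

theorem PosSemidef.iInf_eigenvalues_nonneg (hA : A.PosSemidef) : 0 ≤ ⨅ i, hA.1.eigenvalues i :=
  Real.iInf_nonneg hA.eigenvalues_nonneg

theorem trace_mul_le_iSup_mul_trace_mul_div_iInf [Nonempty ι] (hA : A.PosDef) (hB : B.PosSemidef) (hP : P.PosSemidef) :
    (B * P).trace ≤ (⨆ i, hB.1.eigenvalues i) * (A * P).trace / ⨅ i, hA.1.eigenvalues i := by
  rw [le_div_iff₀ hA.iInf_eigenvalues_pos]
  calc (B * P).trace * ⨅ i, hA.1.eigenvalues i
      ≤ (⨆ i, hB.1.eigenvalues i) * P.trace * ⨅ i, hA.1.eigenvalues i :=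
        mul_le_mul_of_nonneg_right (hB.1.trace_mul_le_of_eigenvalues_le hP hB.1.eigenvalues_le_iSup)
          hA.iInf_eigenvalues_pos.le
    _ = (⨆ i, hB.1.eigenvalues i) * ((⨅ i, hA.1.eigenvalues i) * P.trace) := by ring
    _ ≤ (⨆ i, hB.1.eigenvalues i) * (A * P).trace :=
        mul_le_mul_of_nonneg_left (hA.1.le_trace_mul_of_le_eigenvalues hP hA.1.iInf_le_eigenvalues)
          hB.iSup_eigenvalues_nonneg

theorem iInf_mul_trace_mul_div_iSup_le_trace_mul [Nonempty ι] (hA : A.PosDef) (hB : B.PosSemidef) (hP : P.PosSemidef) :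
    (⨅ i, hB.1.eigenvalues i) * (A * P).trace / (⨆ i, hA.1.eigenvalues i) ≤ (B * P).trace := by
  rw [div_le_iff₀ hA.iSup_eigenvalues_pos]
  calc (⨅ i, hB.1.eigenvalues i) * (A * P).trace
      ≤ (⨅ i, hB.1.eigenvalues i) * ((⨆ i, hA.1.eigenvalues i) * P.trace) :=
        mul_le_mul_of_nonneg_left (hA.1.trace_mul_le_of_eigenvalues_le hP hA.1.eigenvalues_le_iSup)
          hB.iInf_eigenvalues_nonneg
    _ = (⨅ i, hB.1.eigenvalues i) * P.trace * ⨆ i, hA.1.eigenvalues i := by ring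
    _ ≤ (B * P).trace * ⨆ i, hA.1.eigenvalues i :=
        mul_le_mul_of_nonneg_right (hB.1.le_trace_mul_of_le_eigenvalues hP hB.1.iInf_le_eigenvalues)
          hA.iSup_eigenvalues_pos.le

end Matrix

theorem riemannian_hessian_eigen_bounds (Sig S V : Matrix (Fin n) (Fin n) ℝ)
    (hSig : Sig.PosDef) (hS : S.PosSemidef) (hV : V.IsHermitian)
    (hnorm : (1 / 2) * (Sig⁻¹ * V * Sig⁻¹ * V).trace = 1) :
    (0 ≤ (Sig⁻¹ * S * Sig⁻¹ * V * Sig⁻¹ * V).trace ∧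
     (Sig⁻¹ * S * Sig⁻¹ * V * Sig⁻¹ * V).trace
        ≤ 2 * (⨆ i, hS.1.eigenvalues i) / (⨅ i, hSig.1.eigenvalues i)) ∧
    (S.PosDef →
      2 * (⨅ i, hS.1.eigenvalues i) / (⨆ i, hSig.1.eigenvalues i)
        ≤ (Sig⁻¹ * S * Sig⁻¹ * V * Sig⁻¹ * V).trace) := by
  have hne : Nonempty (Fin n) := by
    rcases isEmpty_or_nonempty (Fin n) with h | h
    · simp [Matrix.trace] at hnorm
    · exact h
  set P := Sig⁻¹ * V * Sig⁻¹ * V * Sig⁻¹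
  have hP : P.PosSemidef := hSig.inv.posSemidef.mul_mul_mul_mul_of_isHermitian hV
  have hSP : (Sig⁻¹ * S * Sig⁻¹ * V * Sig⁻¹ * V).trace = (S * P).trace := by
    simp only [P, Matrix.mul_assoc]
    rw [trace_mul_comm]
    simp only [Matrix.mul_assoc]
  have hSigP : (Sig * P).trace = 2 := by
    have hdet : IsUnit Sig.det := hSig.det_pos.ne'.isUnit
    simp only [P, Matrix.mul_assoc, mul_nonsing_inv_cancel_left _ _ hdet]
    rw [← Matrix.mul_assoc, ← Matrix.mul_assoc, trace_mul_comm]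
    simp only [Matrix.mul_assoc] at hnorm ⊢
    linarith
  refine ⟨⟨hSP ▸ hS.trace_mul_nonneg hP, ?_⟩, fun _ => ?_⟩
  · simpa [hSP, hSigP, mul_comm] using trace_mul_le_iSup_mul_trace_mul_div_iInf hSig hS hP
  · simpa [hSP, hSigP, mul_comm] using iInf_mul_trace_mul_div_iSup_le_trace_mul hSig hS hP
end
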